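/- Let Z ⊆ ℝⁿ be a nonempty compact set, let μ : ℝⁿ → [0,1] be continuous, and let g : ℝⁿ → ℝ be continuous. Define μ_w : ℝ → ℝ by μ_w(w) = sup{μ(z) : z ∈ Z, g(z) = w} when {z ∈ Z : g(z) = w} is nonempty and μ_w(w) = 0 otherwise. Then μ_w is upper semicontinuous on ℝ; in particular, for every α ∈ (0,1] the output α-cut {w ∈ ℝ : μ_w(w) ≥ α} is a closed set. -/

import Mathlib

open Set Classical

/-!
If the sup over the fibre of `w` is below `c`, then `w` avoids the image under `g` of the
compact set `Z ∩ {μ ≥ c}`; that image is compact, hence closed, so nearby `w'` avoid it too.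
Their fibres are compact, so the sup over them is attained and is therefore also below `c`.
-/

theorem IsCompact.sSup_image_lt_of_upperSemicontinuous {X : Type*} [TopologicalSpace X]
    {s : Set X} (hs : IsCompact s) {f : X → ℝ} (hf : UpperSemicontinuous f) {c : ℝ}
    (hc : 0 < c) (hlt : ∀ x ∈ s, f x < c) : sSup (f '' s) < c := by
  rcases s.eq_empty_or_nonempty with rfl | hne
  · rwa [image_empty, Real.sSup_empty]
  obtain ⟨a, ha, hmax⟩ := (hf.upperSemicontinuousOn s).exists_isMaxOn hne hs
  exact (csSup_le (hne.image f) (forall_mem_image.2 fun x hx => hmax hx)).trans_lt (hlt a ha)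

theorem upperSemicontinuous_sSup_image_fiber {X Y : Type*} [TopologicalSpace X]
    [TopologicalSpace Y] [T2Space Y] {K : Set X} (hK : IsCompact K) {f : X → ℝ}
    (hf : UpperSemicontinuous f) (hf0 : ∀ x ∈ K, 0 ≤ f x) {g : X → Y} (hg : Continuous g) :
    UpperSemicontinuous fun y => sSup (f '' (K ∩ g ⁻¹' {y})) := by
  have hfiber : ∀ y, IsCompact (K ∩ g ⁻¹' {y}) := fun y =>
    hK.inter_right (isClosed_singleton.preimage hg)
  intro y c hc
  have hc0 : 0 < c :=
    (Real.sSup_nonneg (forall_mem_image.2 fun x hx => hf0 x hx.1)).trans_lt hc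
  have hclosed : IsClosed (g '' (K ∩ f ⁻¹' Ici c)) :=
    ((hK.inter_right (hf.isClosed_preimage c)).image hg).isClosed
  have hy : y ∉ g '' (K ∩ f ⁻¹' Ici c) := by
    rintro ⟨x, ⟨hxK, hxc⟩, rfl⟩
    have hbdd := (hf.upperSemicontinuousOn _).bddAbove_of_isCompact (hfiber (g x))
    exact (hc.trans_le hxc).not_ge (le_csSup hbdd ⟨x, ⟨hxK, rfl⟩, rfl⟩)
  filter_upwards [hclosed.isOpen_compl.mem_nhds hy] with y' hy'
  refine (hfiber y').sSup_image_lt_of_upperSemicontinuous hf hc0 fun x hx => ?_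
  exact not_le.1 fun hxc => hy' ⟨x, ⟨hx.1, hxc⟩, hx.2⟩

theorem extension_principle_output_usc_general {n : ℕ}
    (Z : Set (Fin n → ℝ)) (hZc : IsCompact Z)
    (μ : (Fin n → ℝ) → ℝ) (hμc : Continuous μ) (hμ01 : ∀ z, μ z ∈ Set.Icc (0 : ℝ) 1)
    (g : (Fin n → ℝ) → ℝ) (hg : Continuous g)
    (μw : ℝ → ℝ)
    (hμw : ∀ w : ℝ, μw w =
      if ({z | z ∈ Z ∧ g z = w}).Nonempty
      then sSup (μ '' {z | z ∈ Z ∧ g z = w})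
      else 0) :
    UpperSemicontinuous μw ∧
      ∀ α ∈ Set.Ioc (0 : ℝ) 1, IsClosed {w : ℝ | α ≤ μw w} := by
  -- The `else 0` branch is Lean's own value of `sSup ∅` in `ℝ`.
  have hμw_eq : μw = fun w => sSup (μ '' (Z ∩ g ⁻¹' {w})) := by
    funext w
    rw [hμw w]
    split_ifs with hne
    · rfl
    · rw [show Z ∩ g ⁻¹' {w} = ∅ from not_nonempty_iff_eq_empty.1 hne, image_empty,
        Real.sSup_empty]
  have husc : UpperSemicontinuous μw := hμw_eq ▸
    upperSemicontinuous_sSup_image_fiber hZc hμc.upperSemicontinuous (fun z _ => (hμ01 z).1) hg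
  exact ⟨husc, fun α _ => husc.isClosed_preimage α⟩

/-- The output membership function of the generalized extension principle is upper
semicontinuous: for a nonempty compact `Z ⊆ ℝⁿ`, continuous `μ : ℝⁿ → [0,1]` and
continuous `g : ℝⁿ → ℝ`, the function `μ_w(w) = sup{μ(z) : z ∈ Z, g(z) = w}` (with
value `0` when the preimage is empty) is upper semicontinuous on `ℝ`; in particular
every output α-cut with `α ∈ (0,1]` is closed. -/
theorem extension_principle_output_usc {n : ℕ}
    (Z : Set (Fin n → ℝ)) (hZc : IsCompact Z) (hZne : Z.Nonempty)
    (μ : (Fin n → ℝ) → ℝ) (hμc : Continuous μ) (hμ01 : ∀ z, μ z ∈ Set.Icc (0 : ℝ) 1)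
    (g : (Fin n → ℝ) → ℝ) (hg : Continuous g)
    (μw : ℝ → ℝ)
    (hμw : ∀ w : ℝ, μw w =
      if ({z | z ∈ Z ∧ g z = w}).Nonempty
      then sSup (μ '' {z | z ∈ Z ∧ g z = w})
      else 0) :
    UpperSemicontinuous μw ∧
      ∀ α ∈ Set.Ioc (0 : ℝ) 1, IsClosed {w : ℝ | α ≤ μw w} :=
  extension_principle_output_usc_general Z hZc μ hμc hμ01 g hg μw hμw
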